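/- The Nisio semigroup 𝒮 of (𝒫, f) is the semigroup envelope of (𝒫, f): (i) 𝒮(t)u₀ ≥ S_q(t)u₀ for all t ≥ 0, u₀ ∈ ℝ^d and q ∈ 𝒫; and (ii) for every other semigroup 𝒯 = (𝒯(t))_{t≥0} of maps ℝ^d → ℝ^d satisfying 𝒯(0) = id, 𝒯(s+t) = 𝒯(s)∘𝒯(t), each 𝒯(t) monotone, and 𝒯(t)u₀ ≥ S_q(t)u₀ for all q ∈ 𝒫, t ≥ 0, u₀, one has 𝒮(t)u₀ ≤ 𝒯(t)u₀ for all t ≥ 0 and u₀. -/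

import Mathlib

def IsQMatrix {d : ℕ} (q : Matrix (Fin d) (Fin d) ℝ) : Prop :=
  (∀ i, q i i ≤ 0) ∧ (∀ i j, i ≠ j → 0 ≤ q i j) ∧ (∀ i, ∑ j, q i j = 0)

/-- The affine semigroup `S_q(t)u₀ = e^{tq}u₀ + ∫₀^t e^{sq} f ds`. -/
noncomputable def Sq {d : ℕ} (q : Matrix (Fin d) (Fin d) ℝ) (f : Fin d → ℝ)
    (t : ℝ) (u : Fin d → ℝ) : Fin d → ℝ :=
  (NormedSpace.exp (t • q)).mulVec u +
    ∫ s in (0 : ℝ)..t, (NormedSpace.exp (s • q)).mulVec f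

/-- The one-step operator `ℰ_h u = sup_{q ∈ P} S_q(h)u` (componentwise sup). -/
noncomputable def Eop {d : ℕ} (P : Set (Matrix (Fin d) (Fin d) ℝ))
    (f : Matrix (Fin d) (Fin d) ℝ → Fin d → ℝ) (h : ℝ) (u : Fin d → ℝ) :
    Fin d → ℝ :=
  fun i => sSup ((fun q => Sq q (f q) h u i) '' P)

/-- Successive gaps `[t₁ - t₀, …, t_m - t_{m-1}]` of a list `[t₀, …, t_m]`. -/
def listGaps (l : List ℝ) : List ℝ := l.tail.zipWith (· - ·) l

/-- The iterated operator `ℰ_π = ℰ_{t₁-t₀} ∘ … ∘ ℰ_{t_m - t_{m-1}}` associated to a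
finite partition `π = {t₀ < t₁ < … < t_m}`. -/
noncomputable def Epart {d : ℕ} (E : ℝ → (Fin d → ℝ) → (Fin d → ℝ))
    (pa : Finset ℝ) : (Fin d → ℝ) → (Fin d → ℝ) :=
  ((listGaps (pa.sort (· ≤ ·))).map E).foldr (· ∘ ·) id

/-- Finite partitions of `[0, t]` containing `0` and `t`. -/
def partitionsTo (t : ℝ) : Set (Finset ℝ) :=
  {pa | (0 : ℝ) ∈ pa ∧ t ∈ pa ∧ ∀ s ∈ pa, s ∈ Set.Icc (0 : ℝ) t}

/-- The Nisio semigroup `𝒮(t)u = sup_{π ∈ P_t} ℰ_π u` (componentwise sup). -/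
noncomputable def NisioS {d : ℕ} (P : Set (Matrix (Fin d) (Fin d) ℝ))
    (f : Matrix (Fin d) (Fin d) ℝ → Fin d → ℝ) (t : ℝ) (u : Fin d → ℝ) :
    Fin d → ℝ :=
  fun i => sSup ((fun pa => Epart (Eop P f) pa u i) '' partitionsTo t)

/-! (i) comes from the two-point partition `{0, t}`, for which `ℰ_π = ℰ_t ≥ S_q(t)`.
For (ii), `ℰ_h ≤ 𝒯(h)` since `𝒯(h)` dominates every `S_q(h)`; along a partition with gaps
`h₁, …, h_m`, monotonicity and the semigroup property give
`ℰ_{h₁} ∘ ⋯ ∘ ℰ_{h_m} ≤ 𝒯(h₁) ∘ ⋯ ∘ 𝒯(h_m) = 𝒯(h₁ + ⋯ + h_m) = 𝒯(t)`,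
and `𝒮(t)` is the supremum of the left-hand sides. -/

open Finset

theorem Sq_zero {d : ℕ} (q : Matrix (Fin d) (Fin d) ℝ) (f u : Fin d → ℝ) :
    Sq q f 0 u = u := by
  simp [Sq]

theorem listGaps_cons_cons (a b : ℝ) (l : List ℝ) :
    listGaps (a :: b :: l) = (b - a) :: listGaps (b :: l) := rfl

theorem sum_listGaps :
    ∀ (l : List ℝ) (hl : l ≠ []), (listGaps l).sum = l.getLast hl - l.head hl
  | [], hl => absurd rfl hl
  | [a], _ => by simp [listGaps]
  | a :: b :: l, _ => by
    rw [listGaps_cons_cons, List.sum_cons, sum_listGaps (b :: l) (List.cons_ne_nil b l)]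
    simp only [List.getLast_cons_cons, List.head_cons]
    ring

theorem listGaps_nonneg : ∀ {l : List ℝ}, l.Pairwise (· ≤ ·) → ∀ x ∈ listGaps l, 0 ≤ x
  | [], _, x, hx | [_], _, x, hx => by simp [listGaps] at hx
  | a :: b :: l, hl, x, hx => by
    rw [listGaps_cons_cons, List.mem_cons] at hx
    rcases hx with rfl | hx
    · exact sub_nonneg.2 (List.rel_of_pairwise_cons hl List.mem_cons_self)
    · exact listGaps_nonneg hl.of_cons x hx

theorem pair_mem_partitionsTo {t : ℝ} (ht : 0 ≤ t) :
    ({0, t} : Finset ℝ) ∈ partitionsTo t := by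
  refine ⟨by simp, by simp, fun s hs => ?_⟩
  rcases mem_insert.1 hs with rfl | hs
  · exact ⟨le_rfl, ht⟩
  · rw [mem_singleton.1 hs]
    exact ⟨ht, le_rfl⟩

theorem sum_listGaps_sort_of_mem_partitionsTo {t : ℝ} {pa : Finset ℝ}
    (hpa : pa ∈ partitionsTo t) : (listGaps (pa.sort (· ≤ ·))).sum = t := by
  obtain ⟨h0, ht, hIcc⟩ := hpa
  have hsorted := pa.pairwise_sort (· ≤ ·)
  have hne : pa.sort (· ≤ ·) ≠ [] := List.ne_nil_of_mem ((mem_sort _).2 h0)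
  have hhead : (pa.sort (· ≤ ·)).head hne = 0 :=
    le_antisymm (hsorted.rel_head ((mem_sort _).2 h0))
      (hIcc _ ((mem_sort _).1 (List.head_mem hne))).1
  have hlast : (pa.sort (· ≤ ·)).getLast hne = t :=
    le_antisymm (hIcc _ ((mem_sort _).1 (List.getLast_mem hne))).2
      (hsorted.rel_getLast ((mem_sort _).2 ht))
  rw [sum_listGaps _ hne, hhead, hlast, sub_zero]

section Epart

variable {d : ℕ} {E : ℝ → (Fin d → ℝ) → (Fin d → ℝ)}

theorem Epart_singleton (a : ℝ) : Epart E {a} = id := by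
  simp [Epart, listGaps]

theorem Epart_pair {a b : ℝ} (hab : a < b) : Epart E {a, b} = E (b - a) := by
  have hsort : ({a, b} : Finset ℝ).sort (· ≤ ·) = [a, b] := by
    rw [sort_insert (r := (· ≤ ·)) (fun c hc => by rw [mem_singleton.1 hc]; exact hab.le)
      (by simpa using hab.ne), sort_singleton]
  simp [Epart, hsort, listGaps]

theorem foldr_comp_map_le_of_semigroup {X : Type*} [Preorder X] {E T : ℝ → X → X}
    (hT0 : ∀ u, T 0 u = u)
    (hTadd : ∀ s t, 0 ≤ s → 0 ≤ t → ∀ u, T (s + t) u = T s (T t u))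
    (hTmono : ∀ t, 0 ≤ t → ∀ u v, u ≤ v → T t u ≤ T t v)
    (hET : ∀ h, 0 ≤ h → ∀ u, E h u ≤ T h u) :
    ∀ l : List ℝ, (∀ x ∈ l, 0 ≤ x) → ∀ u, (l.map E).foldr (· ∘ ·) id u ≤ T l.sum u
  | [], _, u => (hT0 u).ge
  | h :: l, hl, u => by
    have hh : 0 ≤ h := hl h List.mem_cons_self
    have hl' : ∀ x ∈ l, 0 ≤ x := fun x hx => hl x (List.mem_cons_of_mem h hx)
    calc ((h :: l).map E).foldr (· ∘ ·) id u
        = E h ((l.map E).foldr (· ∘ ·) id u) := rfl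
      _ ≤ T h ((l.map E).foldr (· ∘ ·) id u) := hET h hh _
      _ ≤ T h (T l.sum u) :=
        hTmono h hh _ _ (foldr_comp_map_le_of_semigroup hT0 hTadd hTmono hET l hl' u)
      _ = T (h :: l).sum u := by
        rw [List.sum_cons, hTadd h l.sum hh (List.sum_nonneg hl')]

theorem Epart_le_of_semigroup {T : ℝ → (Fin d → ℝ) → (Fin d → ℝ)}
    (hT0 : ∀ u, T 0 u = u)
    (hTadd : ∀ s t, 0 ≤ s → 0 ≤ t → ∀ u, T (s + t) u = T s (T t u))
    (hTmono : ∀ t, 0 ≤ t → ∀ u v, u ≤ v → T t u ≤ T t v)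
    (hET : ∀ h, 0 ≤ h → ∀ u, E h u ≤ T h u)
    {t : ℝ} {pa : Finset ℝ} (hpa : pa ∈ partitionsTo t) (u : Fin d → ℝ) :
    Epart E pa u ≤ T t u := by
  rw [← sum_listGaps_sort_of_mem_partitionsTo hpa]
  exact foldr_comp_map_le_of_semigroup hT0 hTadd hTmono hET _
    (listGaps_nonneg (pa.pairwise_sort _)) u

end Epart

section Nisio

variable {d : ℕ} {P : Set (Matrix (Fin d) (Fin d) ℝ)}
  {f : Matrix (Fin d) (Fin d) ℝ → Fin d → ℝ}

theorem Sq_le_Eop {h : ℝ} {u : Fin d → ℝ}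
    (hbdd : ∀ i, BddAbove ((fun q => Sq q (f q) h u i) '' P)) {q : Matrix (Fin d) (Fin d) ℝ}
    (hq : q ∈ P) : Sq q (f q) h u ≤ Eop P f h u :=
  fun i => le_csSup (hbdd i) ⟨q, hq, rfl⟩

theorem Eop_le_of_forall_Sq_le (hne : P.Nonempty) {h : ℝ} {u v : Fin d → ℝ}
    (hv : ∀ q ∈ P, Sq q (f q) h u ≤ v) : Eop P f h u ≤ v :=
  fun i => csSup_le (hne.image _) (by rintro _ ⟨q, hq, rfl⟩; exact hv q hq i)

theorem Epart_le_NisioS {t : ℝ} {u : Fin d → ℝ}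
    (hbdd : ∀ i, BddAbove ((fun pa => Epart (Eop P f) pa u i) '' partitionsTo t))
    {pa : Finset ℝ} (hpa : pa ∈ partitionsTo t) : Epart (Eop P f) pa u ≤ NisioS P f t u :=
  fun i => le_csSup (hbdd i) ⟨pa, hpa, rfl⟩

theorem NisioS_le_of_forall_Epart_le {t : ℝ} (ht : 0 ≤ t) {u v : Fin d → ℝ}
    (hv : ∀ pa ∈ partitionsTo t, Epart (Eop P f) pa u ≤ v) : NisioS P f t u ≤ v :=
  fun i => csSup_le ⟨_, _, pair_mem_partitionsTo ht, rfl⟩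
    (by rintro _ ⟨pa, hpa, rfl⟩; exact hv pa hpa i)

theorem Sq_le_Epart_pair {t : ℝ} (ht : 0 ≤ t) {u : Fin d → ℝ}
    (hbdd : ∀ i, BddAbove ((fun q => Sq q (f q) t u i) '' P)) {q : Matrix (Fin d) (Fin d) ℝ}
    (hq : q ∈ P) : Sq q (f q) t u ≤ Epart (Eop P f) {0, t} u := by
  rcases ht.eq_or_lt with rfl | ht
  · simp [Epart_singleton, Sq_zero]
  · rw [Epart_pair ht, sub_zero]
    exact Sq_le_Eop hbdd hq

end Nisio

theorem nisio_is_semigroup_envelope_general {d : ℕ}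
    (P : Set (Matrix (Fin d) (Fin d) ℝ)) (hne : P.Nonempty)
    (f : Matrix (Fin d) (Fin d) ℝ → Fin d → ℝ)
    (hEfin : ∀ h : ℝ, 0 ≤ h → ∀ (u : Fin d → ℝ) (i : Fin d),
      BddAbove ((fun q => Sq q (f q) h u i) '' P))
    (hSfin : ∀ t : ℝ, 0 ≤ t → ∀ (u : Fin d → ℝ) (i : Fin d),
      BddAbove ((fun pa => Epart (Eop P f) pa u i) '' partitionsTo t)) :
    (∀ t : ℝ, 0 ≤ t → ∀ u : Fin d → ℝ, ∀ q ∈ P,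
      Sq q (f q) t u ≤ NisioS P f t u) ∧
    (∀ T : ℝ → (Fin d → ℝ) → (Fin d → ℝ),
      (∀ u : Fin d → ℝ, T 0 u = u) →
      (∀ s t : ℝ, 0 ≤ s → 0 ≤ t → ∀ u : Fin d → ℝ, T (s + t) u = T s (T t u)) →
      (∀ t : ℝ, 0 ≤ t → ∀ u v : Fin d → ℝ, u ≤ v → T t u ≤ T t v) →
      (∀ t : ℝ, 0 ≤ t → ∀ u : Fin d → ℝ, ∀ q ∈ P, Sq q (f q) t u ≤ T t u) →
      ∀ t : ℝ, 0 ≤ t → ∀ u : Fin d → ℝ, NisioS P f t u ≤ T t u) := by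
  refine ⟨fun t ht u q hq => ?_, fun T hT0 hTadd hTmono hTdom t ht u => ?_⟩
  · exact (Sq_le_Epart_pair ht (hEfin t ht u) hq).trans
      (Epart_le_NisioS (hSfin t ht u) (pair_mem_partitionsTo ht))
  · have hEop_le_T : ∀ h, 0 ≤ h → ∀ v, Eop P f h v ≤ T h v :=
      fun h hh v => Eop_le_of_forall_Sq_le hne fun q hq => hTdom h hh v q hq
    exact NisioS_le_of_forall_Epart_le ht fun pa hpa =>
      Epart_le_of_semigroup hT0 hTadd hTmono hEop_le_T hpa u

/-- The Nisio semigroup is the semigroup envelope of `(P, f)`: it dominates every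
`S_q`, and it is the smallest monotone semigroup doing so. -/
theorem nisio_is_semigroup_envelope {d : ℕ} (hd : 0 < d)
    (P : Set (Matrix (Fin d) (Fin d) ℝ)) (hne : P.Nonempty)
    (hQ : ∀ q ∈ P, IsQMatrix q)
    (f : Matrix (Fin d) (Fin d) ℝ → Fin d → ℝ)
    (hf0 : ∀ q ∈ P, f q ≤ 0)
    (hq₀ : ∃ q₀ ∈ P, f q₀ = 0)
    (hEfin : ∀ h : ℝ, 0 ≤ h → ∀ (u : Fin d → ℝ) (i : Fin d),
      BddAbove ((fun q => Sq q (f q) h u i) '' P))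
    (hSfin : ∀ t : ℝ, 0 ≤ t → ∀ (u : Fin d → ℝ) (i : Fin d),
      BddAbove ((fun pa => Epart (Eop P f) pa u i) '' partitionsTo t)) :
    (∀ t : ℝ, 0 ≤ t → ∀ u : Fin d → ℝ, ∀ q ∈ P,
      Sq q (f q) t u ≤ NisioS P f t u) ∧
    (∀ T : ℝ → (Fin d → ℝ) → (Fin d → ℝ),
      (∀ u : Fin d → ℝ, T 0 u = u) →
      (∀ s t : ℝ, 0 ≤ s → 0 ≤ t → ∀ u : Fin d → ℝ, T (s + t) u = T s (T t u)) →
      (∀ t : ℝ, 0 ≤ t → ∀ u v : Fin d → ℝ, u ≤ v → T t u ≤ T t v) →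
      (∀ t : ℝ, 0 ≤ t → ∀ u : Fin d → ℝ, ∀ q ∈ P, Sq q (f q) t u ≤ T t u) →
      ∀ t : ℝ, 0 ≤ t → ∀ u : Fin d → ℝ, NisioS P f t u ≤ T t u) :=
  nisio_is_semigroup_envelope_general P hne f hEfin hSfin
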